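/- arXiv:2509.03410 — 7 statements merged into one kernel-verified Lean document; each statement's English description precedes it below -/
import Mathlib

section
/- Suppose the imputation model satisfies the MMG decomposition p(x_{r̄} | x_r, R=r) = ∏_{k=1}^K p(x_{s_k} | x_{N_G(s_k)}, R=r), where s_1,…,s_K are the connected components of the missing variables r̄ in an undirected graph G, and each factor satisfies the PAI restriction p(x_{s_k} | x_{N_G(s_k)}, R=r) = p(x_{s_k} | x_{N_G(s_k)}, R_{N̄_G(s_k)} = 1). Then each factor, and hence the full extrapolation density p(x_{r̄} | x_r, R=r), is a function only of quantities determined by the observed-data distribution {p(x_r, R=r) : r ∈ {0,1}^d}; hence the full-data distribution p(x,r) is nonparametrically identified. -/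
open Finset
open scoped Classical

section MMG

variable {d : ℕ} {S : Type} [Fintype S]

/-- Graph neighborhood of a vertex set. -/
def nbd (G : SimpleGraph (Fin d)) (s : Set (Fin d)) : Set (Fin d) :=
  {v | v ∉ s ∧ ∃ u ∈ s, G.Adj u v}

/-- Reachability within a set `M`. -/
def reachIn (G : SimpleGraph (Fin d)) (M : Set (Fin d)) (u v : Fin d) : Prop :=
  u ∈ M ∧ Relation.ReflTransGen (fun a b => b ∈ M ∧ G.Adj a b) u v

/-- Connected component of `M` containing `v`. -/
def compOf (G : SimpleGraph (Fin d)) (M : Set (Fin d)) (v : Fin d) : Set (Fin d) :=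
  {u | reachIn G M v u}

/-- Connected components of `M` in `G`. -/
def components (G : SimpleGraph (Fin d)) (M : Set (Fin d)) : Set (Set (Fin d)) :=
  {c | ∃ v ∈ M, c = compOf G M v}

def missingSet (r : Fin d → Bool) : Set (Fin d) := {j | r j = false}

def obsSet (r : Fin d → Bool) : Set (Fin d) := {j | r j = true}

/-- The event that all variables in `E` are observed. -/
def obsEv (E : Set (Fin d)) (r : Fin d → Bool) : Prop := ∀ j ∈ E, r j = true

/-- The density `p(x_A, R = r)`: marginalize all coordinates outside `A`. -/
noncomputable def margOn (p : (Fin d → S) → (Fin d → Bool) → ℝ)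
    (A : Set (Fin d)) (x : Fin d → S) (r : Fin d → Bool) : ℝ :=
  ∑ y : Fin d → S, if ∀ j ∈ A, y j = x j then p y r else 0

/-- The density `p(x_A, R_E = 1)`. -/
noncomputable def margObs (p : (Fin d → S) → (Fin d → Bool) → ℝ)
    (A E : Set (Fin d)) (x : Fin d → S) : ℝ :=
  ∑ r : Fin d → Bool, if obsEv E r then margOn p A x r else 0

/-- The conditional density `p(x_T | x_C, R = r)`. -/
noncomputable def condAt (p : (Fin d → S) → (Fin d → Bool) → ℝ)
    (T C : Set (Fin d)) (r : Fin d → Bool) (x : Fin d → S) : ℝ :=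
  margOn p (T ∪ C) x r / margOn p C x r

/-- The conditional density `p(x_T | x_C, R_E = 1)`. -/
noncomputable def condObs (p : (Fin d → S) → (Fin d → Bool) → ℝ)
    (T C E : Set (Fin d)) (x : Fin d → S) : ℝ :=
  margObs p (T ∪ C) E x / margObs p C E x

/-- PAI-identified submodel `p(x_T | x_{N_G(T)}, R_{N̄_G(T)} = 1)`. -/
noncomputable def condPAI (p : (Fin d → S) → (Fin d → Bool) → ℝ)
    (G : SimpleGraph (Fin d)) (T : Set (Fin d)) (x : Fin d → S) : ℝ :=
  condObs p T (nbd G T) (T ∪ nbd G T) x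

/-- MMG imputation model: product of PAI submodels over connected components of missing set. -/
noncomputable def mmgModel (p : (Fin d → S) → (Fin d → Bool) → ℝ)
    (G : SimpleGraph (Fin d)) (x : Fin d → S) (r : Fin d → Bool) : ℝ :=
  ∏ c ∈ (Set.toFinite (components G (missingSet r))).toFinset, condPAI p G c x

end MMG

section Aux

variable {d : ℕ} {S : Type} [Fintype S]

/-- Marginal on a subset is determined by the marginal on a superset. -/
lemma margOn_of_subset (p : (Fin d → S) → (Fin d → Bool) → ℝ) (A B : Set (Fin d))
    (hAB : A ⊆ B) (x : Fin d → S) (r : Fin d → Bool) :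
    margOn p A x r
      = ∑ z : Fin d → S,
          if (∀ j ∈ A, z j = x j) ∧ (∀ j, j ∉ B → z j = x j)
          then margOn p B z r else 0 := by
  unfold margOn
  have step1 : ∀ z : Fin d → S,
      (if (∀ j ∈ A, z j = x j) ∧ (∀ j, j ∉ B → z j = x j)
        then (∑ y : Fin d → S, if ∀ j ∈ B, y j = z j then p y r else 0) else 0)
      = ∑ y : Fin d → S,
          if ((∀ j ∈ A, z j = x j) ∧ (∀ j, j ∉ B → z j = x j)) ∧ (∀ j ∈ B, y j = z j)
          then p y r else 0 := by
    intro z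
    by_cases h : (∀ j ∈ A, z j = x j) ∧ (∀ j, j ∉ B → z j = x j)
    · rw [if_pos h]
      exact Finset.sum_congr rfl (fun y _ => (if_congr (and_iff_right h) rfl rfl).symm)
    · rw [if_neg h]
      rw [Finset.sum_congr rfl (fun y _ => if_neg (fun hc => h hc.1))]
      simp
  rw [Finset.sum_congr rfl (fun z _ => step1 z), Finset.sum_comm]
  refine Finset.sum_congr rfl (fun y _ => ?_)
  classical
  set z0 : Fin d → S := fun j => if j ∈ B then y j else x j with hz0
  have key : ∀ z : Fin d → S,
      (((∀ j ∈ A, z j = x j) ∧ (∀ j, j ∉ B → z j = x j)) ∧ (∀ j ∈ B, y j = z j))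
      ↔ (z = z0 ∧ ∀ j ∈ A, y j = x j) := by
    intro z
    constructor
    · rintro ⟨⟨h1, h2⟩, h3⟩
      constructor
      · funext j
        by_cases hj : j ∈ B
        · simp [hz0, hj, ← h3 j hj]
        · simp [hz0, hj, h2 j hj]
      · intro j hj
        rw [h3 j (hAB hj), h1 j hj]
    · rintro ⟨rfl, h⟩
      refine ⟨⟨fun j hj => ?_, fun j hj => ?_⟩, fun j hj => ?_⟩
      · simp [hz0, hAB hj, h j hj]
      · simp [hz0, hj]
      · simp [hz0, hj]
  calc (if ∀ j ∈ A, y j = x j then p y r else 0)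
      = ∑ z : Fin d → S, if z = z0 ∧ ∀ j ∈ A, y j = x j then p y r else 0 := by
        by_cases h : ∀ j ∈ A, y j = x j
        · rw [if_pos h,
            Finset.sum_congr rfl (fun z (_ : z ∈ Finset.univ) =>
              if_congr (and_iff_left h) rfl rfl)]
          simp
        · rw [if_neg h,
            Finset.sum_congr rfl (fun z (_ : z ∈ Finset.univ) =>
              if_neg (fun hc => h hc.2))]
          simp
    _ = _ := Finset.sum_congr rfl (fun z _ => by rw [if_congr (key z).symm rfl rfl])

lemma margOn_eq (p₁ p₂ : (Fin d → S) → (Fin d → Bool) → ℝ)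
    (hobs : ∀ x r, margOn p₁ (obsSet r) x r = margOn p₂ (obsSet r) x r)
    (A : Set (Fin d)) (x : Fin d → S) (r : Fin d → Bool) (hA : A ⊆ obsSet r) :
    margOn p₁ A x r = margOn p₂ A x r := by
  rw [margOn_of_subset p₁ A (obsSet r) hA, margOn_of_subset p₂ A (obsSet r) hA]
  exact Finset.sum_congr rfl (fun z _ => by rw [hobs z r])

lemma margObs_eq (p₁ p₂ : (Fin d → S) → (Fin d → Bool) → ℝ)
    (hobs : ∀ x r, margOn p₁ (obsSet r) x r = margOn p₂ (obsSet r) x r)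
    (A E : Set (Fin d)) (hAE : A ⊆ E) (x : Fin d → S) :
    margObs p₁ A E x = margObs p₂ A E x := by
  unfold margObs
  refine Finset.sum_congr rfl (fun r _ => ?_)
  by_cases h : obsEv E r
  · have hE : E ⊆ obsSet r := fun j hj => h j hj
    simp only [h, if_true]
    exact margOn_eq p₁ p₂ hobs A x r (hAE.trans hE)
  · simp [h]

lemma condPAI_eq (G : SimpleGraph (Fin d)) (p₁ p₂ : (Fin d → S) → (Fin d → Bool) → ℝ)
    (hobs : ∀ x r, margOn p₁ (obsSet r) x r = margOn p₂ (obsSet r) x r)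
    (c : Set (Fin d)) (x : Fin d → S) :
    condPAI p₁ G c x = condPAI p₂ G c x := by
  unfold condPAI condObs
  rw [margObs_eq p₁ p₂ hobs _ _ (by simp) x,
    margObs_eq p₁ p₂ hobs (nbd G c) _ Set.subset_union_right x]

lemma margOn_univ (p : (Fin d → S) → (Fin d → Bool) → ℝ) (x : Fin d → S)
    (r : Fin d → Bool) : margOn p Set.univ x r = p x r := by
  unfold margOn
  rw [Finset.sum_eq_single x]
  · simp
  · intro y _ hy
    exact if_neg (fun h => hy (funext fun j => h j (Set.mem_univ j)))
  · simp

end Aux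

/-- nonparametric identification under MMG and PAI.
If both joint distributions satisfy the MMG decomposition of the extrapolation density
over connected components of the missing set, each factor satisfying the PAI restriction,
then agreement of the observed-data densities implies equality of the full-data laws. -/
theorem stmt1 {d : ℕ} {S : Type} [Fintype S] (G : SimpleGraph (Fin d))
    (p₁ p₂ : (Fin d → S) → (Fin d → Bool) → ℝ)
    (hMMG : ∀ p ∈ ({p₁, p₂} : Set ((Fin d → S) → (Fin d → Bool) → ℝ)), ∀ x r,
      condAt p (missingSet r) (obsSet r) r x
        = ∏ c ∈ (Set.toFinite (components G (missingSet r))).toFinset,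
            condAt p c (nbd G c) r x)
    (hPAI : ∀ p ∈ ({p₁, p₂} : Set ((Fin d → S) → (Fin d → Bool) → ℝ)), ∀ x r,
      ∀ c ∈ components G (missingSet r),
        condAt p c (nbd G c) r x = condPAI p G c x)
    (hobs : ∀ x r, margOn p₁ (obsSet r) x r = margOn p₂ (obsSet r) x r)
    (hpos₁ : ∀ x r, margOn p₁ (obsSet r) x r ≠ 0)
    (hpos₂ : ∀ x r, margOn p₂ (obsSet r) x r ≠ 0)
    (hposPAI : ∀ p ∈ ({p₁, p₂} : Set ((Fin d → S) → (Fin d → Bool) → ℝ)),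
      ∀ x (c : Set (Fin d)), margObs p (nbd G c) (c ∪ nbd G c) x ≠ 0) :
    p₁ = p₂ := by
  funext x r
  have hmo : missingSet r ∪ obsSet r = Set.univ := by
    ext j; by_cases h : r j <;> simp [missingSet, obsSet, h]
  have hp : ∀ p ∈ ({p₁, p₂} : Set ((Fin d → S) → (Fin d → Bool) → ℝ)),
      margOn p (obsSet r) x r ≠ 0 →
      p x r = (∏ c ∈ (Set.toFinite (components G (missingSet r))).toFinset,
          condPAI p G c x) * margOn p (obsSet r) x r := by
    intro p hpmem hpos
    have h1 := hMMG p hpmem x r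
    have h2 : condAt p (missingSet r) (obsSet r) r x
        = ∏ c ∈ (Set.toFinite (components G (missingSet r))).toFinset,
            condPAI p G c x := by
      rw [h1]
      refine Finset.prod_congr rfl (fun c hc => ?_)
      exact hPAI p hpmem x r c ((Set.Finite.mem_toFinset _).mp hc)
    have h3 : condAt p (missingSet r) (obsSet r) r x
        = p x r / margOn p (obsSet r) x r := by
      unfold condAt
      rw [hmo, margOn_univ]
    rw [h3, div_eq_iff hpos] at h2
    exact h2
  have e1 := hp p₁ (by simp) (hpos₁ x r)
  have e2 := hp p₂ (by simp) (hpos₂ x r)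
  rw [e1, e2, hobs x r]
  congr 1
  exact Finset.prod_congr rfl (fun c _ => condPAI_eq G p₁ p₂ hobs c x)
end

section
/- If the Markov missing graph G = (V,E) on d vertices is complete (every pair of distinct vertices is adjacent), then for every response pattern r and every connected component s of the missing set r̄, one has N̄_G(s) = V and N_G(s) = V \ s; consequently the MMG-PAI identifying restriction p(x_{r̄} | x_r, R = r) = p(x_{r̄} | x_r, R = 1_d) holds, i.e., MMG with PAI coincides with the complete-case missing value (CCMV) assumption. -/
open Finset
open scoped Classical

lemma compOf_eq {d : ℕ} (G : SimpleGraph (Fin d))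
    (hc : ∀ u v : Fin d, u ≠ v → G.Adj u v) (M : Set (Fin d)) {v : Fin d} (hv : v ∈ M) :
    compOf G M v = M := by
  ext u
  constructor
  · rintro ⟨-, h⟩
    induction h with
    | refl => exact hv
    | tail _ h ih => exact h.1
  · intro hu
    refine ⟨hv, ?_⟩
    rcases eq_or_ne v u with rfl | hne
    · exact .refl
    · exact Relation.ReflTransGen.single ⟨hu, hc v u hne⟩

lemma components_eq {d : ℕ} (G : SimpleGraph (Fin d))
    (hc : ∀ u v : Fin d, u ≠ v → G.Adj u v) (M : Set (Fin d)) (hM : M.Nonempty) :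
    components G M = {M} := by
  ext c
  simp only [components, Set.mem_setOf_eq, Set.mem_singleton_iff]
  constructor
  · rintro ⟨v, hv, rfl⟩; exact compOf_eq G hc _ hv
  · rintro rfl; obtain ⟨v, hv⟩ := hM; exact ⟨v, hv, (compOf_eq G hc _ hv).symm⟩

lemma nbd_complete {d : ℕ} (G : SimpleGraph (Fin d))
    (hc : ∀ u v : Fin d, u ≠ v → G.Adj u v) (s : Set (Fin d)) (hs : s.Nonempty) :
    nbd G s = Set.univ \ s := by
  ext v
  simp only [nbd, Set.mem_setOf_eq, Set.mem_diff, Set.mem_univ, true_and]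
  constructor
  · exact fun h => h.1
  · intro hv
    obtain ⟨u, hu⟩ := hs
    exact ⟨hv, u, hu, hc u v (fun h => hv (h ▸ hu))⟩

lemma obsSet_eq {d : ℕ} (r : Fin d → Bool) : obsSet r = Set.univ \ missingSet r := by
  ext j
  simp only [obsSet, missingSet, Set.mem_setOf_eq, Set.mem_diff, Set.mem_univ, true_and]
  cases r j <;> simp

lemma margObs_univ {d : ℕ} {S : Type} [Fintype S] (p : (Fin d → S) → (Fin d → Bool) → ℝ)
    (A : Set (Fin d)) (x : Fin d → S) :
    margObs p A Set.univ x = margOn p A x (fun _ => true) := by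
  unfold margObs
  rw [Finset.sum_eq_single (fun _ => true)]
  · simp [obsEv]
  · intro r _ hr
    rw [if_neg]
    intro h
    exact hr (funext fun j => h j (Set.mem_univ j))
  · simp

/-- complete graph: MMG-PAI coincides with CCMV.
If `G` is complete, then for every pattern `r` and connected component `s` of the missing
set, `N̄_G(s) = V` and `N_G(s) = V \ s`; consequently, under the MMG decomposition and the
PAI restriction, the extrapolation density equals the complete-case conditional
`p(x_{r̄} | x_r, R = 1_d)`. -/
theorem stmt2 {d : ℕ} {S : Type} [Fintype S] (G : SimpleGraph (Fin d))
    (hcomplete : ∀ u v : Fin d, u ≠ v → G.Adj u v)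
    (p : (Fin d → S) → (Fin d → Bool) → ℝ)
    (hMMG : ∀ x r, condAt p (missingSet r) (obsSet r) r x
        = ∏ c ∈ (Set.toFinite (components G (missingSet r))).toFinset,
            condAt p c (nbd G c) r x)
    (hPAI : ∀ x r, ∀ c ∈ components G (missingSet r),
        condAt p c (nbd G c) r x = condPAI p G c x)
    (hpos : ∀ x r, margOn p (obsSet r) x r ≠ 0)
    (hpos1 : ∀ (A : Set (Fin d)) x, margOn p A x (fun _ => true) ≠ 0) :
    (∀ r : Fin d → Bool, ∀ s ∈ components G (missingSet r),
        s ∪ nbd G s = (Set.univ : Set (Fin d)) ∧ nbd G s = Set.univ \ s)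
    ∧ (∀ x r, condAt p (missingSet r) (obsSet r) r x
        = condAt p (missingSet r) (obsSet r) (fun _ => true) x) := by
  constructor
  · intro r s hs
    obtain ⟨v, hv, rfl⟩ := hs
    rw [compOf_eq G hcomplete _ hv, nbd_complete G hcomplete _ ⟨v, hv⟩]
    exact ⟨Set.union_diff_cancel (Set.subset_univ _), rfl⟩
  · intro x r
    by_cases hM : missingSet r = ∅
    · have hr : r = fun _ => true := by
        funext j
        by_contra h
        have : j ∈ missingSet r := by
          simp only [missingSet, Set.mem_setOf_eq]
          cases hrj : r j
          · rfl
          · exact absurd hrj h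
        rw [hM] at this
        exact this
      rw [hr]
    · have hMne : (missingSet r).Nonempty := Set.nonempty_iff_ne_empty.mpr hM
      have hcomps := components_eq G hcomplete _ hMne
      have hnbd := nbd_complete G hcomplete _ hMne
      have htf : (Set.toFinite (components G (missingSet r))).toFinset = {missingSet r} := by
        ext c
        simp only [Set.Finite.mem_toFinset, hcomps, Finset.mem_singleton]; rfl
      rw [hMMG x r, htf, Finset.prod_singleton,
        hPAI x r _ (by rw [hcomps]; exact Set.mem_singleton _)]
      unfold condPAI condObs condAt
      rw [hnbd, Set.union_diff_cancel (Set.subset_univ _), margObs_univ, margObs_univ,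
        obsSet_eq, Set.union_diff_cancel (Set.subset_univ _)]
end

section
/- Let X be a random vector whose distribution satisfies the global Markov property with respect to an undirected graph G (i.e., for any connected component s of a set of vertices and its neighborhood N_G(s), X_s is conditionally independent of the remaining variables given X_{N_G(s)}). Suppose missingness is MCAR: R ⟂ X. Then for every response pattern r with missing components decomposing into connected components s_1,…,s_K of G, the MMG-PAI imputation model equals the true conditional distribution: ∏_{k=1}^K p(x_{s_k} | x_{N_G(s_k)}, R_{N̄_G(s_k)}=1) = p(x_{r̄} | x_r). -/
/-!
Under MCAR the response factor cancels from each PAI submodel, which becomes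
`p(x_s | x_{N(s)})`. For a component `s` of the missing set `M`, the Markov identity
`p(x) p(x_{N(s)}) = p(x_{s ∪ N(s)}) p(x_{sᶜ})` survives marginalising out `M \ s`, which avoids
`s ∪ N(s)`; this gives `p(x_s | x_{N(s)}) = p(x_{(M \ s)ᶜ}) / p(x_{Mᶜ})`. Since the components
of `M \ s` are the remaining components of `M`, removing them one at a time makes the product
telescope to `p(x) / p(x_{Mᶜ}) = p(x_M | x_{Mᶜ})`.
-/

open Finset
open scoped Classical

/-- Marginal density of `X_A` for a full-data density `px`. -/
noncomputable def margX {d : ℕ} {S : Type} [Fintype S]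
    (px : (Fin d → S) → ℝ) (A : Set (Fin d)) (x : Fin d → S) : ℝ :=
  ∑ y : Fin d → S, if ∀ j ∈ A, y j = x j then px y else 0

/-- Conditional density `p(x_T | x_C)` for the full-data density `px`. -/
noncomputable def condX {d : ℕ} {S : Type} [Fintype S]
    (px : (Fin d → S) → ℝ) (T C : Set (Fin d)) (x : Fin d → S) : ℝ :=
  margX px (T ∪ C) x / margX px C x



section Marginal

variable {d : ℕ} {S : Type} [Fintype S] (px : (Fin d → S) → ℝ)

lemma margX_congr {A : Set (Fin d)} {x y : Fin d → S} (h : ∀ j ∈ A, y j = x j) :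
    margX px A y = margX px A x := by
  unfold margX
  refine Finset.sum_congr rfl fun z _ => if_congr ?_ rfl rfl
  exact forall₂_congr fun j hj => by rw [h j hj]

lemma sum_margX_of_subset {B T : Set (Fin d)} (hTB : T ⊆ B) (x : Fin d → S) :
    (∑ y, if ∀ j ∈ Tᶜ, y j = x j then margX px B y else 0) = margX px (B \ T) x := by
  simp only [margX, Finset.ite_sum_zero, ← ite_and]
  rw [Finset.sum_comm]
  refine Finset.sum_congr rfl fun z _ => ?_
  have hunique : ∀ y : Fin d → S, ((∀ j ∈ Tᶜ, y j = x j) ∧ ∀ j ∈ B, z j = y j) ↔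
      (y = T.piecewise z x ∧ ∀ j ∈ B \ T, z j = x j) := by
    intro y
    constructor
    · rintro ⟨hoff, hon⟩
      refine ⟨funext fun j => ?_, fun j hj => (hon j hj.1).trans (hoff j hj.2)⟩
      by_cases hj : j ∈ T
      · simp [Set.piecewise_eq_of_mem _ _ _ hj, hon j (hTB hj)]
      · simp [Set.piecewise_eq_of_notMem _ _ _ hj, hoff j hj]
    · rintro ⟨rfl, hBT⟩
      refine ⟨fun j hj => Set.piecewise_eq_of_notMem _ _ _ hj, fun j hj => ?_⟩
      by_cases hjT : j ∈ T
      · simp [Set.piecewise_eq_of_mem _ _ _ hjT]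
      · simp [Set.piecewise_eq_of_notMem _ _ _ hjT, hBT j ⟨hj, hjT⟩]
  simp only [hunique, ite_and, Finset.sum_ite_eq', Finset.mem_univ, if_true]
  congr

lemma sum_margX_mul_margX_of_subset {A B T : Set (Fin d)} (hA : A ⊆ Tᶜ) (hTB : T ⊆ B)
    (x : Fin d → S) :
    (∑ y, if ∀ j ∈ Tᶜ, y j = x j then margX px A y * margX px B y else 0)
      = margX px A x * margX px (B \ T) x := by
  rw [← sum_margX_of_subset px hTB, Finset.mul_sum]
  refine Finset.sum_congr rfl fun y _ => ?_
  split_ifs with hy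
  · rw [margX_congr px fun j hj => hy j (hA hj)]
  · rw [mul_zero]

end Marginal

section Components

variable {d : ℕ} {G : SimpleGraph (Fin d)} {M c : Set (Fin d)} {u v w : Fin d}

lemma reachIn.mem_right (h : reachIn G M u v) : v ∈ M := by
  obtain ⟨hu, h⟩ := h
  induction h with
  | refl => exact hu
  | tail _ hstep => exact hstep.1

lemma reachIn.symm (h : reachIn G M u v) : reachIn G M v u := by
  obtain ⟨hu, h⟩ := h
  refine ⟨reachIn.mem_right ⟨hu, h⟩, ?_⟩
  induction h with
  | refl => exact .refl
  | tail hab hstep ih => exact .head ⟨reachIn.mem_right ⟨hu, hab⟩, hstep.2.symm⟩ ih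

lemma reachIn.trans (huv : reachIn G M u v) (hvw : reachIn G M v w) : reachIn G M u w :=
  ⟨huv.1, huv.2.trans hvw.2⟩

lemma mem_compOf_self (hv : v ∈ M) : v ∈ compOf G M v := ⟨hv, .refl⟩

lemma compOf_mem_components (hv : v ∈ M) : compOf G M v ∈ components G M := ⟨v, hv, rfl⟩

lemma compOf_eq_of_mem (hu : u ∈ compOf G M v) : compOf G M u = compOf G M v :=
  Set.ext fun _ => ⟨hu.trans, hu.symm.trans⟩

lemma subset_of_mem_components (hc : c ∈ components G M) : c ⊆ M := by
  obtain ⟨v, -, rfl⟩ := hc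
  exact fun _ hu => hu.mem_right

lemma mem_of_reachIn_of_mem_components (hc : c ∈ components G M) (h : reachIn G M u v)
    (hv : v ∈ c) : u ∈ c := by
  obtain ⟨v₀, -, rfl⟩ := hc
  exact hv.trans h.symm

lemma disjoint_nbd_of_mem_components (hc : c ∈ components G M) : Disjoint (nbd G c) M := by
  refine Set.disjoint_left.2 fun j ⟨hjc, u, hu, hadj⟩ hjM => hjc ?_
  obtain ⟨v, -, rfl⟩ := hc
  exact hu.trans ⟨hu.mem_right, .single ⟨hjM, hadj⟩⟩

lemma compOf_diff_of_mem_components (hc : c ∈ components G M) (hv : v ∈ M \ c) :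
    compOf G (M \ c) v = compOf G M v := by
  ext u
  constructor
  · rintro ⟨-, h⟩
    exact ⟨hv.1, Relation.ReflTransGen.mono (fun _ _ hab => ⟨hab.1.1, hab.2⟩) _ _ h⟩
  · rintro ⟨-, h⟩
    refine ⟨hv, ?_⟩
    induction h with
    | refl => exact .refl
    | @tail a b hva hab ih =>
      have hb : b ∉ c := fun hb => hv.2 <|
        mem_of_reachIn_of_mem_components hc ⟨hv.1, hva.tail hab⟩ hb
      exact ih.tail ⟨⟨hab.1, hb⟩, hab.2⟩

lemma components_diff_of_mem_components (hc : c ∈ components G M) :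
    components G (M \ c) = components G M \ {c} := by
  ext c'
  constructor
  · rintro ⟨v, hv, rfl⟩
    rw [compOf_diff_of_mem_components hc hv]
    refine ⟨compOf_mem_components hv.1, fun heq => hv.2 ?_⟩
    exact (Set.mem_singleton_iff.1 heq) ▸ mem_compOf_self hv.1
  · rintro ⟨⟨v, hv, rfl⟩, hne⟩
    have hvc : v ∉ c := by
      obtain ⟨v₀, -, rfl⟩ := hc
      exact fun hvc => hne (compOf_eq_of_mem hvc)
    exact ⟨v, ⟨hv, hvc⟩, (compOf_diff_of_mem_components hc ⟨hv, hvc⟩).symm⟩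

end Components

section MCAR

variable {d : ℕ} {S : Type} [Fintype S] {p : (Fin d → S) → (Fin d → Bool) → ℝ}
  {px : (Fin d → S) → ℝ} {pr : (Fin d → Bool) → ℝ}

lemma margOn_eq_of_mcar (hMCAR : ∀ x r, p x r = px x * pr r) (A : Set (Fin d))
    (x : Fin d → S) (r : Fin d → Bool) : margOn p A x r = margX px A x * pr r := by
  simp only [margOn, margX, Finset.sum_mul, hMCAR, ite_zero_mul]

lemma margObs_eq_of_mcar (hMCAR : ∀ x r, p x r = px x * pr r) (A E : Set (Fin d))
    (x : Fin d → S) :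
    margObs p A E x = margX px A x * ∑ r : Fin d → Bool, if obsEv E r then pr r else 0 := by
  simp only [margObs, margOn_eq_of_mcar hMCAR, Finset.mul_sum, mul_ite, mul_zero]

lemma condPAI_eq_condX_of_mcar (hMCAR : ∀ x r, p x r = px x * pr r)
    (hposR : ∀ E : Set (Fin d), (∑ r : Fin d → Bool, if obsEv E r then pr r else 0) ≠ 0)
    (G : SimpleGraph (Fin d)) (c : Set (Fin d)) (x : Fin d → S) :
    condPAI p G c x = condX px c (nbd G c) x := by
  rw [condPAI, condObs, condX, margObs_eq_of_mcar hMCAR, margObs_eq_of_mcar hMCAR,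
    mul_div_mul_right _ _ (hposR _)]

end MCAR

section Markov

variable {d : ℕ} {S : Type} [Fintype S] {px : (Fin d → S) → ℝ}

lemma margX_mul_margX_compl_of_markov {s N T : Set (Fin d)}
    (hMarkov : ∀ y, margX px Set.univ y * margX px N y = margX px (s ∪ N) y * margX px sᶜ y)
    (hT : Disjoint T (s ∪ N)) (x : Fin d → S) :
    margX px N x * margX px Tᶜ x = margX px (s ∪ N) x * margX px (sᶜ \ T) x := by
  have hsN : s ∪ N ⊆ Tᶜ := hT.symm.subset_compl_right
  calc margX px N x * margX px Tᶜ x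
      = ∑ y, if ∀ j ∈ Tᶜ, y j = x j then margX px N y * margX px Set.univ y else 0 := by
        rw [sum_margX_mul_margX_of_subset px (Set.subset_union_right.trans hsN)
          (Set.subset_univ T), Set.compl_eq_univ_sdiff]
    _ = ∑ y, if ∀ j ∈ Tᶜ, y j = x j then margX px (s ∪ N) y * margX px sᶜ y else 0 := by
        simp only [mul_comm (margX px N _), hMarkov]
    _ = margX px (s ∪ N) x * margX px (sᶜ \ T) x :=
        sum_margX_mul_margX_of_subset px hsN
          (Set.subset_compl_comm.1 (Set.subset_union_left.trans hsN)) x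

variable {G : SimpleGraph (Fin d)}

lemma condX_nbd_eq_of_mem_components {M c : Set (Fin d)} (hc : c ∈ components G M)
    (hMarkov : ∀ y, condX px c cᶜ y = condX px c (nbd G c) y)
    (hposX : ∀ (A : Set (Fin d)) x, margX px A x ≠ 0) (x : Fin d → S) :
    condX px c (nbd G c) x = margX px (M \ c)ᶜ x / margX px Mᶜ x := by
  have hprod : ∀ y, margX px Set.univ y * margX px (nbd G c) y
      = margX px (c ∪ nbd G c) y * margX px cᶜ y := fun y => by
    have h := hMarkov y
    rwa [condX, condX, Set.union_compl_self, div_eq_div_iff (hposX _ _) (hposX _ _)] at h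
  have hdisj : Disjoint (M \ c) (c ∪ nbd G c) :=
    Disjoint.union_right Set.disjoint_sdiff_left
      ((disjoint_nbd_of_mem_components hc).symm.mono_left Set.sdiff_subset)
  have hrest := margX_mul_margX_compl_of_markov hprod hdisj x
  have hMc : cᶜ \ (M \ c) = Mᶜ := by
    have hcM := subset_of_mem_components hc
    ext j
    simp only [Set.mem_sdiff, Set.mem_compl_iff]
    exact ⟨fun h hjM => h.2 ⟨hjM, h.1⟩, fun hjM => ⟨fun hjc => hjM (hcM hjc), fun h => hjM h.1⟩⟩
  rw [hMc] at hrest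
  rw [condX, div_eq_div_iff (hposX _ _) (hposX _ _)]
  linear_combination -hrest

theorem prod_condX_nbd_components_eq
    (hMarkov : ∀ (M : Set (Fin d)), ∀ s ∈ components G M, ∀ x,
      condX px s (sᶜ) x = condX px s (nbd G s) x)
    (hposX : ∀ (A : Set (Fin d)) x, margX px A x ≠ 0) (M : Set (Fin d)) (x : Fin d → S) :
    ∏ c ∈ (Set.toFinite (components G M)).toFinset, condX px c (nbd G c) x
      = margX px Set.univ x / margX px Mᶜ x := by
  induction hn : (Set.toFinite (components G M)).toFinset.card generalizing M with
  | zero =>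
    have hempty := Finset.card_eq_zero.1 hn
    have hM : M = ∅ := Set.eq_empty_of_forall_notMem fun v hv =>
      Finset.notMem_empty _ (hempty ▸ (Set.Finite.mem_toFinset _).2 (compOf_mem_components hv))
    rw [hempty, Finset.prod_empty, hM, Set.compl_empty, div_self (hposX _ _)]
  | succ n ih =>
    obtain ⟨c, hcF⟩ := Finset.card_pos.1 (by rw [hn]; omega)
    have hc : c ∈ components G M := (Set.Finite.mem_toFinset _).1 hcF
    have hrest : (Set.toFinite (components G (M \ c))).toFinset
        = (Set.toFinite (components G M)).toFinset.erase c := by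
      ext c'
      simp only [Set.Finite.mem_toFinset, components_diff_of_mem_components hc,
        Finset.mem_erase, Set.mem_sdiff, Set.mem_singleton_iff, and_comm]
    rw [← Finset.mul_prod_erase _ _ hcF, ← hrest,
      ih (M \ c) (by rw [hrest, Finset.card_erase_of_mem hcF, hn, Nat.add_sub_cancel]),
      condX_nbd_eq_of_mem_components hc (hMarkov M c hc) hposX,
      mul_comm, div_mul_div_cancel₀ (hposX _ _)]

end Markov

/-- recovery under MCAR and the global Markov property.
If `X` satisfies the global Markov property w.r.t. `G` (each connected component of any
vertex set is conditionally independent of the rest given its neighborhood) and `R ⟂ X`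
(MCAR), then the MMG-PAI imputation model equals the true conditional distribution:
`∏_k p(x_{s_k} | x_{N_G(s_k)}, R_{N̄_G(s_k)}=1) = p(x_{r̄} | x_r)`. -/
theorem stmt4 {d : ℕ} {S : Type} [Fintype S] (G : SimpleGraph (Fin d))
    (p : (Fin d → S) → (Fin d → Bool) → ℝ)
    (px : (Fin d → S) → ℝ) (pr : (Fin d → Bool) → ℝ)
    (hMCAR : ∀ x r, p x r = px x * pr r)
    (hMarkov : ∀ (M : Set (Fin d)), ∀ s ∈ components G M, ∀ x,
      condX px s (sᶜ) x = condX px s (nbd G s) x)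
    (hposX : ∀ (A : Set (Fin d)) x, margX px A x ≠ 0)
    (hposR : ∀ E : Set (Fin d),
      (∑ r : Fin d → Bool, if obsEv E r then pr r else 0) ≠ 0) :
    ∀ (r : Fin d → Bool) x,
      (∏ c ∈ (Set.toFinite (components G (missingSet r))).toFinset, condPAI p G c x)
        = condX px (missingSet r) (obsSet r) x := by
  intro r x
  have hobs : obsSet r = (missingSet r)ᶜ := by
    ext j
    simp [obsSet, missingSet]
  rw [Finset.prod_congr rfl fun c _ => condPAI_eq_condX_of_mcar hMCAR hposR G c x,
    prod_condX_nbd_components_eq hMarkov hposX, hobs, condX, Set.union_compl_self]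
end

section
/- Let X = (X_1, X_{−1}) and R a response pattern with r_1 = 0, and let s_j = ψ(r̄) be the connected component of the graph G containing vertex 1 within the missing set. Assume the Markov (MMG) property p(x_1, x_r, R=r) integrates so that E[X_1 I(R=r)] depends on the other variables only through X_{N_G(s_j)}, and the PAI restriction p(x_1 | x_{N_G(s_j)}, R = r) = p(x_1 | x_{N_G(s_j)}, R_{N̄_G(s_j)} = 1). Then E[X_1 I(R = r)] = E[m_{s_j}(X_{N_G(s_j)}) I(R = r)], where m_{s_j}(x_{N_G(s_j)}) = ∫ x_1 p(x_1 | x_{N_G(s_j)}, R_{N̄_G(s_j)} = 1) dx_1. -/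
open Finset
open scoped Classical

/-- regression-adjustment identification.
For a pattern `r` with `X₁` missing, let `s = ψ(r̄)` be the connected component of the
missing set containing vertex `1` and `N = N_G(s)` its neighborhood. Under the combined
MMG-PAI restriction `p(x₁ | x_N, R = r) = p(x₁ | x_N, R_{N̄} = 1)`,
`E[X₁ I(R = r)] = E[m_s(X_N) I(R = r)]` where `m_s` is the PAI-identified regression
function. -/
theorem stmt6 {d : ℕ} {S : Type} [Fintype S] (G : SimpleGraph (Fin d))
    (p : (Fin d → S) → (Fin d → Bool) → ℝ) (val : S → ℝ)
    (v1 : Fin d) (r : Fin d → Bool) (hr : r v1 = false)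
    (s N : Set (Fin d))
    (hs : s = compOf G (missingSet r) v1) (hN : N = nbd G s)
    (hnn : ∀ x r', 0 ≤ p x r')
    (hMMGPAI : ∀ x, condAt p {v1} N r x = condObs p {v1} N (s ∪ N) x)
    (hpos : ∀ x, margOn p N x r ≠ 0)
    (hposObs : ∀ x, margObs p N (s ∪ N) x ≠ 0) :
    (∑ x : Fin d → S, val (x v1) * p x r)
      = ∑ x : Fin d → S,
          (∑ a : S, val a * condObs p {v1} N (s ∪ N) (Function.update x v1 a)) * p x r := by
    classical
  have hv1s : v1 ∈ s := by
    rw [hs]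
    exact ⟨hr, Relation.ReflTransGen.refl⟩
  have hv1N : v1 ∉ N := by
    rw [hN]; exact fun h => h.1 hv1s
  set D : (Fin d → S) → ℝ := fun x => margOn p N x r with hD
  have hDcongr : ∀ x y : Fin d → S, (∀ j ∈ N, y j = x j) → D y = D x := by
    intro x y h
    simp only [hD, margOn]
    refine Finset.sum_congr rfl fun z _ => ?_
    have hiff : (∀ j ∈ N, z j = y j) ↔ (∀ j ∈ N, z j = x j) :=
      forall₂_congr fun j hj => by rw [h j hj]
    simp only [hiff]
  have hupd : ∀ (x : Fin d → S) (a : S),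
      margOn p N (Function.update x v1 a) r = D x := by
    intro x a
    exact hDcongr x _ (fun j hj => Function.update_of_ne (fun (h : j = v1) => hv1N (h ▸ hj)) a x)
  have key : ∀ (x : Fin d → S) (a : S), condObs p {v1} N (s ∪ N) (Function.update x v1 a)
      = (∑ y : Fin d → S, if y v1 = a ∧ ∀ j ∈ N, y j = x j then p y r else 0) / D x := by
    intro x a
    rw [← hMMGPAI]
    unfold condAt
    rw [hupd]
    congr 1
    unfold margOn
    refine Finset.sum_congr rfl fun y _ => ?_
    have hiff : (∀ j ∈ ({v1} : Set (Fin d)) ∪ N, y j = Function.update x v1 a j)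
        ↔ (y v1 = a ∧ ∀ j ∈ N, y j = x j) := by
      constructor
      · intro h
        refine ⟨?_, fun j hj => ?_⟩
        · have := h v1 (Or.inl rfl); simpa using this
        · have := h j (Or.inr hj)
          rwa [Function.update_of_ne (fun (hjv : j = v1) => hv1N (hjv ▸ hj))] at this
      · rintro ⟨h1, h2⟩ j hj
        rcases hj with hj | hj
        · rcases hj with rfl
          simpa using h1
        · rw [Function.update_of_ne (fun (hjv : j = v1) => hv1N (hjv ▸ hj))]
          exact h2 j hj
    simp only [hiff]
  symm
  calc ∑ x : Fin d → S,
          (∑ a : S, val a * condObs p {v1} N (s ∪ N) (Function.update x v1 a)) * p x r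
      = ∑ x : Fin d → S, ∑ a : S, ∑ y : Fin d → S,
          (if y v1 = a ∧ ∀ j ∈ N, y j = x j then val a * (p y r / D y) * p x r else 0) := by
        refine Finset.sum_congr rfl fun x _ => ?_
        rw [Finset.sum_mul]
        refine Finset.sum_congr rfl fun a _ => ?_
        rw [key x a, div_eq_mul_inv, Finset.sum_mul, Finset.mul_sum, Finset.sum_mul]
        refine Finset.sum_congr rfl fun y _ => ?_
        by_cases h : y v1 = a ∧ ∀ j ∈ N, y j = x j
        · rw [if_pos h, if_pos h, hDcongr x y h.2]
          ring
        · simp [h]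
    _ = ∑ a : S, ∑ y : Fin d → S, ∑ x : Fin d → S,
          (if y v1 = a ∧ ∀ j ∈ N, y j = x j then val a * (p y r / D y) * p x r else 0) := by
        rw [Finset.sum_comm]
        exact Finset.sum_congr rfl fun a _ => Finset.sum_comm
    _ = ∑ a : S, ∑ y : Fin d → S, (if y v1 = a then val a * p y r else 0) := by
        refine Finset.sum_congr rfl fun a _ => Finset.sum_congr rfl fun y _ => ?_
        by_cases h1 : y v1 = a
        · simp only [h1, true_and, if_true]
          have step : (∑ x : Fin d → S,
              if ∀ j ∈ N, y j = x j then val a * (p y r / D y) * p x r else 0)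
              = val a * (p y r / D y) * ∑ x : Fin d → S,
                  (if ∀ j ∈ N, y j = x j then p x r else 0) := by
            rw [Finset.mul_sum]
            exact Finset.sum_congr rfl fun x _ => by split <;> ring
          rw [step]
          have hDy : (∑ x : Fin d → S, if ∀ j ∈ N, y j = x j then p x r else 0) = D y := by
            simp only [hD, margOn]
            refine Finset.sum_congr rfl fun x _ => ?_
            have hiff : (∀ j ∈ N, y j = x j) ↔ (∀ j ∈ N, x j = y j) :=
              forall₂_congr fun j hj => eq_comm
            simp only [hiff]
          rw [hDy, mul_assoc, div_mul_cancel₀ _ (hpos y)]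
        · simp [h1]
    _ = ∑ y : Fin d → S, ∑ a : S, (if y v1 = a then val a * p y r else 0) := Finset.sum_comm
    _ = ∑ x : Fin d → S, val (x v1) * p x r := by
        refine Finset.sum_congr rfl fun y _ => ?_
        rw [Finset.sum_ite_eq]
        simp
end

section
/- Under the setup of MMG-PAI, for a response pattern r with r_1 = 0 and connected component s_j = ψ(r̄) containing vertex 1, define the odds O_r(x_{N_G(s_j)}) = P(R = r | x_{N_G(s_j)}) / P(R ≥ N̄_G(s_j) | x_{N_G(s_j)}). Then the inverse probability weighting identity holds: E[X_1 I(R = r)] = E[X_1 · O_r(X_{N_G(s_j)}) · I(R ≥ N̄_G(s_j))]. -/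
open Finset
open scoped Classical

section AuxStmt7

variable {d : ℕ} {S : Type} [Fintype S]

/-- Number of configurations agreeing with `y` on `A`. -/
noncomputable def agreeCount (A : Set (Fin d)) (y : Fin d → S) : ℕ :=
  (Finset.univ.filter fun x : Fin d → S => ∀ j ∈ A, y j = x j).card

lemma agreeCount_const (A : Set (Fin d)) (y y' : Fin d → S) :
    agreeCount A y = agreeCount A y' := by
  unfold agreeCount
  refine Finset.card_nbij' (fun x => fun j => if j ∈ A then y' j else x j)
      (fun x => fun j => if j ∈ A then y j else x j) ?_ ?_ ?_ ?_
  · intro x hx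
    simp only [Finset.mem_coe, Finset.mem_filter, Finset.mem_univ, true_and] at hx ⊢
    intro j hj; simp [hj]
  · intro x hx
    simp only [Finset.mem_coe, Finset.mem_filter, Finset.mem_univ, true_and] at hx ⊢
    intro j hj; simp [hj]
  · intro x hx
    simp only [Finset.mem_coe, Finset.mem_filter, Finset.mem_univ, true_and] at hx
    funext j
    by_cases hj : j ∈ A <;> simp [hj]
    exact hx j hj
  · intro x hx
    simp only [Finset.mem_coe, Finset.mem_filter, Finset.mem_univ, true_and] at hx
    funext j
    by_cases hj : j ∈ A <;> simp [hj]
    exact hx j hj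

lemma agreeCount_pos (A : Set (Fin d)) (y : Fin d → S) : 0 < agreeCount A y := by
  unfold agreeCount
  exact Finset.card_pos.mpr ⟨y, by simp⟩

lemma group_sum (A : Set (Fin d)) (f g : (Fin d → S) → ℝ)
    (hf : ∀ x y : Fin d → S, (∀ j ∈ A, y j = x j) → f x = f y)
    (y₀ : Fin d → S) :
    ∑ x : Fin d → S, f x * (∑ y : Fin d → S, if ∀ j ∈ A, y j = x j then g y else 0)
      = (agreeCount A y₀ : ℝ) * ∑ y : Fin d → S, f y * g y := by
  have h1 : ∀ x : Fin d → S,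
      f x * (∑ y : Fin d → S, if ∀ j ∈ A, y j = x j then g y else 0)
        = ∑ y : Fin d → S, if ∀ j ∈ A, y j = x j then f x * g y else 0 := by
    intro x
    rw [Finset.mul_sum]
    exact Finset.sum_congr rfl fun y _ => by rw [mul_ite, mul_zero]
  simp only [h1]
  rw [Finset.sum_comm]
  have h2 : ∀ y : Fin d → S,
      (∑ x : Fin d → S, if ∀ j ∈ A, y j = x j then f x * g y else 0)
        = (f y * g y) * (agreeCount A y₀ : ℝ) := by
    intro y
    have e1 : (∑ x : Fin d → S, if ∀ j ∈ A, y j = x j then f x * g y else 0)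
        = ∑ x : Fin d → S, if ∀ j ∈ A, y j = x j then f y * g y else 0 := by
      refine Finset.sum_congr rfl fun x _ => ?_
      by_cases h : ∀ j ∈ A, y j = x j
      · rw [if_pos h, if_pos h, hf x y h]
      · rw [if_neg h, if_neg h]
    rw [e1, ← Finset.sum_filter, Finset.sum_const, nsmul_eq_mul,
      agreeCount_const A y₀ y]
    unfold agreeCount
    ring
  simp only [h2]
  rw [← Finset.sum_mul]
  ring

lemma margOn_congr (p : (Fin d → S) → (Fin d → Bool) → ℝ) (C : Set (Fin d))
    (x y : Fin d → S) (h : ∀ j ∈ C, y j = x j) (r : Fin d → Bool) :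
    margOn p C x r = margOn p C y r := by
  unfold margOn
  refine Finset.sum_congr rfl fun z _ => ?_
  refine if_congr ?_ rfl rfl
  constructor
  · intro hz j hj; rw [hz j hj, ← h j hj]
  · intro hz j hj; rw [hz j hj, h j hj]

lemma margObs_congr (p : (Fin d → S) → (Fin d → Bool) → ℝ) (C E : Set (Fin d))
    (x y : Fin d → S) (h : ∀ j ∈ C, y j = x j) :
    margObs p C E x = margObs p C E y := by
  unfold margObs
  exact Finset.sum_congr rfl fun r' _ => by rw [margOn_congr p C x y h r']

lemma margObs_swap (p : (Fin d → S) → (Fin d → Bool) → ℝ) (A E : Set (Fin d))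
    (x : Fin d → S) :
    margObs p A E x
      = ∑ y : Fin d → S, if ∀ j ∈ A, y j = x j then
          (∑ r' : Fin d → Bool, if obsEv E r' then p y r' else 0) else 0 := by
  unfold margObs margOn
  have h1 : ∀ r' : Fin d → Bool,
      (if obsEv E r' then (∑ y : Fin d → S, if ∀ j ∈ A, y j = x j then p y r' else 0) else 0)
        = ∑ y : Fin d → S, if ∀ j ∈ A, y j = x j then
            (if obsEv E r' then p y r' else 0) else 0 := by
    intro r'
    by_cases h : obsEv E r' <;> simp [h]
  simp only [h1]
  rw [Finset.sum_comm]
  refine Finset.sum_congr rfl fun y _ => ?_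
  by_cases h : ∀ j ∈ A, y j = x j <;> simp [h]

end AuxStmt7

/-- inverse probability weighting identity.
For a pattern `r` with `X₁` missing, component `s = ψ(r̄)` containing vertex `1` and
neighborhood `N = N_G(s)`, defining the odds
`O_r(x_N) = P(R = r | x_N) / P(R ≥ N̄_G(s) | x_N)`, the MMG-PAI restriction yields
`E[X₁ I(R = r)] = E[X₁ · O_r(X_N) · I(R ≥ N̄_G(s))]`. -/
theorem stmt7 {d : ℕ} {S : Type} [Fintype S] (G : SimpleGraph (Fin d))
    (p : (Fin d → S) → (Fin d → Bool) → ℝ) (val : S → ℝ)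
    (v1 : Fin d) (r : Fin d → Bool) (hr : r v1 = false)
    (s N : Set (Fin d))
    (hs : s = compOf G (missingSet r) v1) (hN : N = nbd G s)
    (hnn : ∀ x r', 0 ≤ p x r')
    (hMMGPAI : ∀ x, condAt p {v1} N r x = condObs p {v1} N (s ∪ N) x)
    (hpos : ∀ x, margOn p N x r ≠ 0)
    (hposObs : ∀ x, margObs p N (s ∪ N) x ≠ 0) :
    (∑ x : Fin d → S, val (x v1) * p x r)
      = ∑ x : Fin d → S, ∑ r' : Fin d → Bool,
          if obsEv (s ∪ N) r' then
            val (x v1) * (margOn p N x r / margObs p N (s ∪ N) x) * p x r'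
          else 0 := by
  rcases isEmpty_or_nonempty (Fin d → S) with hE | hNE
  · simp
  obtain ⟨y₀⟩ := hNE
  set A : Set (Fin d) := {v1} ∪ N with hA
  have hKne : (agreeCount A y₀ : ℝ) ≠ 0 := by
    exact_mod_cast (agreeCount_pos A y₀).ne'
  apply mul_left_cancel₀ hKne
  -- Key pointwise identity from MMG-PAI
  have hkey : ∀ x : Fin d → S,
      val (x v1) * (margOn p N x r / margObs p N (s ∪ N) x) * margObs p A (s ∪ N) x
        = val (x v1) * margOn p A x r := by
    intro x
    have h := hMMGPAI x
    unfold condAt condObs at h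
    have hb := hpos x
    have he := hposObs x
    have hAe : ({v1} : Set (Fin d)) ∪ N = A := rfl
    rw [hAe] at h
    field_simp at h ⊢
    linear_combination (-(val (x v1))) * h
  -- Left side
  have hfval : ∀ x y : Fin d → S, (∀ j ∈ A, y j = x j) →
      val (x v1) = val (y v1) := by
    intro x y h
    rw [h v1 (Set.mem_union_left N rfl)]
  have hL : (agreeCount A y₀ : ℝ) * (∑ x : Fin d → S, val (x v1) * p x r)
      = ∑ x : Fin d → S, val (x v1) * margOn p A x r := by
    rw [← group_sum A (fun x => val (x v1)) (fun x => p x r) hfval y₀]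
    rfl
  -- Right side
  have hq : ∀ x : Fin d → S,
      (∑ r' : Fin d → Bool, if obsEv (s ∪ N) r' then
          val (x v1) * (margOn p N x r / margObs p N (s ∪ N) x) * p x r' else 0)
        = (val (x v1) * (margOn p N x r / margObs p N (s ∪ N) x))
            * (∑ r' : Fin d → Bool, if obsEv (s ∪ N) r' then p x r' else 0) := by
    intro x
    rw [Finset.mul_sum]
    exact Finset.sum_congr rfl fun r' _ => by rw [mul_ite, mul_zero]
  have hfw : ∀ x y : Fin d → S, (∀ j ∈ A, y j = x j) →
      val (x v1) * (margOn p N x r / margObs p N (s ∪ N) x)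
        = val (y v1) * (margOn p N y r / margObs p N (s ∪ N) y) := by
    intro x y h
    have hNsub : ∀ j ∈ N, y j = x j := fun j hj => h j (Set.mem_union_right _ hj)
    rw [hfval x y h, margOn_congr p N x y hNsub r, margObs_congr p N (s ∪ N) x y hNsub]
  have hR : (agreeCount A y₀ : ℝ) * (∑ x : Fin d → S, ∑ r' : Fin d → Bool,
        if obsEv (s ∪ N) r' then
          val (x v1) * (margOn p N x r / margObs p N (s ∪ N) x) * p x r' else 0)
      = ∑ x : Fin d → S, val (x v1)
          * (margOn p N x r / margObs p N (s ∪ N) x) * margObs p A (s ∪ N) x := by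
    simp only [hq]
    rw [← group_sum A
      (fun x => val (x v1) * (margOn p N x r / margObs p N (s ∪ N) x))
      (fun x => ∑ r' : Fin d → Bool, if obsEv (s ∪ N) r' then p x r' else 0) hfw y₀]
    exact Finset.sum_congr rfl fun x _ => by rw [margObs_swap p A (s ∪ N) x]
  rw [hL, hR]
  exact (Finset.sum_congr rfl fun x _ => (hkey x).symm)
end

section
/- (Robustness to misspecified odds) Under MMG-PAI, suppose the regression function m_{s_j}(x) = E[X_1 | X_{N_G(s_j)} = x, R ≥ N̄_G(s_j)] is correct but the odds is replaced by an arbitrary bounded measurable O* of X_{N_G(s_j)}. If additionally the PAI restriction implies E[X_1 | X_{N_G(s_j)}, R ∈ S_j] = m_{s_j}(X_{N_G(s_j)}), then E[ X_1 · O*(X_{N_G(s_j)}) · I(R ≥ N̄_G(s_j)) + m_{s_j}(X_{N_G(s_j)}) · ( I(ψ(R̄)=s_j) − I(R ≥ N̄_G(s_j)) · O*(X_{N_G(s_j)}) ) ] = μ_{s_j}. -/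
open Finset
open scoped Classical

/-- PAI-identified regression function
`m(x) = E[X₁ | X_N = x_N, R_{N̄} = 1]` in density form. -/
noncomputable def mReg {d : ℕ} {S : Type} [Fintype S]
    (p : (Fin d → S) → (Fin d → Bool) → ℝ) (val : S → ℝ) (v1 : Fin d)
    (N Nb : Set (Fin d)) (x : Fin d → S) : ℝ :=
  (∑ r : Fin d → Bool, if obsEv Nb r then
      (∑ y : Fin d → S, if ∀ j ∈ N, y j = x j then val (y v1) * p y r else 0) else 0)
    / margObs p N Nb x

/-- Aggregated odds `O_{s_j}(x) = P(R ∈ S_j | X_N = x) / P(R_{N̄} = 1 | X_N = x)`. -/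
noncomputable def oddsAgg {d : ℕ} {S : Type} [Fintype S]
    (p : (Fin d → S) → (Fin d → Bool) → ℝ)
    (N Nb : Set (Fin d)) (Sj : Finset (Fin d → Bool)) (x : Fin d → S) : ℝ :=
  (∑ r ∈ Sj, margOn p N x r) / margObs p N Nb x


section Aux
open Finset

private lemma mReg_agree {d : ℕ} {S : Type} [Fintype S]
    (p : (Fin d → S) → (Fin d → Bool) → ℝ) (val : S → ℝ) (v1 : Fin d)
    (N Nb : Set (Fin d)) {x z : Fin d → S} (h : ∀ j ∈ N, x j = z j) :
    mReg p val v1 N Nb x = mReg p val v1 N Nb z := by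
  have hcond : ∀ y : Fin d → S, (∀ j ∈ N, y j = x j) ↔ (∀ j ∈ N, y j = z j) := by
    intro y
    constructor <;> intro hy j hj
    · rw [hy j hj, h j hj]
    · rw [hy j hj, ← h j hj]
  unfold mReg margObs margOn
  simp only [hcond]

private lemma keyObs {d : ℕ} {S : Type} [Fintype S]
    (p : (Fin d → S) → (Fin d → Bool) → ℝ) (val : S → ℝ) (v1 : Fin d)
    (N Nb : Set (Fin d)) (hpos : ∀ x, margObs p N Nb x ≠ 0) (z : Fin d → S) :
    ∑ r : Fin d → Bool, (if obsEv Nb r then (1:ℝ) else 0) *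
      (∑ y : Fin d → S, if ∀ j ∈ N, y j = z j then
        (val (y v1) - mReg p val v1 N Nb z) * p y r else 0) = 0 := by
  have h1 : ∀ r : Fin d → Bool, (if obsEv Nb r then (1:ℝ) else 0) *
      (∑ y : Fin d → S, if ∀ j ∈ N, y j = z j then
        (val (y v1) - mReg p val v1 N Nb z) * p y r else 0)
      = (if obsEv Nb r then
          (∑ y : Fin d → S, if ∀ j ∈ N, y j = z j then val (y v1) * p y r else 0) else 0)
        - mReg p val v1 N Nb z * (if obsEv Nb r then margOn p N z r else 0) := by
    intro r
    by_cases ho : obsEv Nb r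
    · simp only [ho, if_true, one_mul, margOn]
      rw [Finset.mul_sum, ← Finset.sum_sub_distrib]
      refine Finset.sum_congr rfl fun y _ => ?_
      by_cases hc : ∀ j ∈ N, y j = z j
      · rw [if_pos hc, if_pos hc, if_pos hc]; ring
      · rw [if_neg hc, if_neg hc, if_neg hc]; ring
    · simp [ho]
  rw [Finset.sum_congr rfl fun r _ => h1 r, Finset.sum_sub_distrib, ← Finset.mul_sum]
  have h2 : (∑ r : Fin d → Bool, if obsEv Nb r then
      (∑ y : Fin d → S, if ∀ j ∈ N, y j = z j then val (y v1) * p y r else 0) else 0)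
      = mReg p val v1 N Nb z * margObs p N Nb z := by
    rw [mReg, div_mul_cancel₀ _ (hpos z)]
  have h3 : (∑ r : Fin d → Bool, if obsEv Nb r then margOn p N z r else 0)
      = margObs p N Nb z := rfl
  rw [h2, h3, sub_self]

private lemma sum_zero_of_classes {d : ℕ} {S : Type} [Fintype S] (s0 : S) (N : Set (Fin d))
    (F : (Fin d → S) → ℝ)
    (h0 : ∀ z : Fin d → S,
      ∑ x ∈ Finset.univ.filter (fun x => ∀ j ∈ N, x j = z j), F x = 0) :
    ∑ x : Fin d → S, F x = 0 := by
  classical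
  set φ : (Fin d → S) → (Fin d → S) := fun x j => if j ∈ N then x j else s0 with hφ
  rw [← Finset.sum_fiberwise Finset.univ φ F]
  apply Finset.sum_eq_zero
  intro z _
  by_cases hz : ∀ j, j ∉ N → z j = s0
  · have hfil : Finset.univ.filter (fun x => φ x = z)
        = Finset.univ.filter (fun x => ∀ j ∈ N, x j = z j) := by
      apply Finset.filter_congr
      intro x _
      constructor
      · intro h j hj; rw [← h]; simp [hφ, hj]
      · intro h; funext j
        by_cases hj : j ∈ N
        · simp [hφ, hj, h j hj]
        · simp [hφ, hj, hz j hj]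
    rw [hfil]; exact h0 z
  · rw [Finset.filter_false_of_mem, Finset.sum_empty]
    intro x _ hxz
    exact hz fun j hj => by rw [← hxz]; simp [hφ, hj]

end Aux

/-- robustness to misspecified odds.
If the regression function `m_{s_j}(x) = E[X₁ | X_N = x, R ≥ N̄]` is correct, the odds is
replaced by an arbitrary function `O*` of `X_{N_G(s_j)}`, and the PAI restriction gives
`E[X₁ | X_N, R ∈ S_j] = m_{s_j}(X_N)` (stated in cross-multiplied density form), then the
augmented estimator remains unbiased for `μ_{s_j}`. -/
theorem stmt13 {d : ℕ} {S : Type} [Fintype S] (G : SimpleGraph (Fin d))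
    (p : (Fin d → S) → (Fin d → Bool) → ℝ) (val : S → ℝ)
    (v1 : Fin d) (s N Nb : Set (Fin d))
    (hN : N = nbd G s) (hNb : Nb = s ∪ N)
    (Sj : Finset (Fin d → Bool))
    (hSj : Sj = Finset.univ.filter
      (fun r : Fin d → Bool => r v1 = false ∧ compOf G (missingSet r) v1 = s))
    (Ostar : (Fin d → S) → ℝ)
    (hOstar : ∀ x y : Fin d → S, (∀ j ∈ N, x j = y j) → Ostar x = Ostar y)
    (hcondSj : ∀ x : Fin d → S,
      (∑ r ∈ Sj, ∑ y : Fin d → S,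
          if ∀ j ∈ N, y j = x j then (val (y v1) - mReg p val v1 N Nb x) * p y r else 0)
        = 0)
    (hposObs : ∀ x, margObs p N Nb x ≠ 0) :
    (∑ x : Fin d → S, ∑ r : Fin d → Bool,
        (val (x v1) * Ostar x * (if obsEv Nb r then 1 else 0)
          + mReg p val v1 N Nb x
            * ((if r ∈ Sj then 1 else 0) - (if obsEv Nb r then 1 else 0) * Ostar x)) * p x r)
      = ∑ x : Fin d → S, ∑ r : Fin d → Bool,
          (if r ∈ Sj then 1 else 0) * val (x v1) * p x r := by
  classical
  rcases isEmpty_or_nonempty S with hS | hS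
  · haveI : IsEmpty (Fin d → S) := ⟨fun f => hS.false (f v1)⟩
    simp
  · obtain ⟨s0⟩ := hS
    have hA : (∑ x : Fin d → S, ∑ r : Fin d → Bool,
        (val (x v1) - mReg p val v1 N Nb x) * Ostar x *
          ((if obsEv Nb r then (1:ℝ) else 0) * p x r)) = 0 := by
      apply sum_zero_of_classes s0 N
      intro z
      have step : ∑ x ∈ Finset.univ.filter (fun x => ∀ j ∈ N, x j = z j),
          ∑ r : Fin d → Bool, (val (x v1) - mReg p val v1 N Nb x) * Ostar x *
            ((if obsEv Nb r then (1:ℝ) else 0) * p x r)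
          = Ostar z * ∑ r : Fin d → Bool, (if obsEv Nb r then (1:ℝ) else 0) *
              (∑ y : Fin d → S, if ∀ j ∈ N, y j = z j then
                (val (y v1) - mReg p val v1 N Nb z) * p y r else 0) := by
        rw [Finset.sum_comm, Finset.mul_sum]
        refine Finset.sum_congr rfl fun r _ => ?_
        rw [← Finset.sum_filter, Finset.mul_sum, Finset.mul_sum]
        refine Finset.sum_congr rfl fun x hx => ?_
        simp only [Finset.mem_filter] at hx
        rw [mReg_agree p val v1 N Nb hx.2, hOstar x z hx.2]
        ring
      rw [step, keyObs p val v1 N Nb hposObs z, mul_zero]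
    have hB : (∑ x : Fin d → S, ∑ r : Fin d → Bool,
        (val (x v1) - mReg p val v1 N Nb x) *
          ((if r ∈ Sj then (1:ℝ) else 0) * p x r)) = 0 := by
      apply sum_zero_of_classes s0 N
      intro z
      have step : ∑ x ∈ Finset.univ.filter (fun x => ∀ j ∈ N, x j = z j),
          ∑ r : Fin d → Bool, (val (x v1) - mReg p val v1 N Nb x) *
            ((if r ∈ Sj then (1:ℝ) else 0) * p x r)
          = ∑ r : Fin d → Bool, (if r ∈ Sj then (1:ℝ) else 0) *
              (∑ y : Fin d → S, if ∀ j ∈ N, y j = z j then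
                (val (y v1) - mReg p val v1 N Nb z) * p y r else 0) := by
        rw [Finset.sum_comm]
        refine Finset.sum_congr rfl fun r _ => ?_
        rw [← Finset.sum_filter, Finset.mul_sum]
        refine Finset.sum_congr rfl fun x hx => ?_
        simp only [Finset.mem_filter] at hx
        rw [mReg_agree p val v1 N Nb hx.2]
        ring
      rw [step]
      have h4 : ∀ r : Fin d → Bool, (if r ∈ Sj then (1:ℝ) else 0) *
          (∑ y : Fin d → S, if ∀ j ∈ N, y j = z j then
            (val (y v1) - mReg p val v1 N Nb z) * p y r else 0)
          = if r ∈ Sj then (∑ y : Fin d → S, if ∀ j ∈ N, y j = z j then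
              (val (y v1) - mReg p val v1 N Nb z) * p y r else 0) else 0 := by
        intro r; by_cases hr : r ∈ Sj <;> simp [hr]
      rw [Finset.sum_congr rfl fun r _ => h4 r, Finset.sum_ite_mem, Finset.univ_inter]
      exact hcondSj z
    rw [← sub_eq_zero]
    have key : (∑ x : Fin d → S, ∑ r : Fin d → Bool,
          (val (x v1) * Ostar x * (if obsEv Nb r then 1 else 0)
            + mReg p val v1 N Nb x
              * ((if r ∈ Sj then 1 else 0) - (if obsEv Nb r then 1 else 0) * Ostar x)) * p x r)
        - (∑ x : Fin d → S, ∑ r : Fin d → Bool,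
            (if r ∈ Sj then 1 else 0) * val (x v1) * p x r)
        = (∑ x : Fin d → S, ∑ r : Fin d → Bool,
            (val (x v1) - mReg p val v1 N Nb x) * Ostar x *
              ((if obsEv Nb r then (1:ℝ) else 0) * p x r))
          - (∑ x : Fin d → S, ∑ r : Fin d → Bool,
              (val (x v1) - mReg p val v1 N Nb x) *
                ((if r ∈ Sj then (1:ℝ) else 0) * p x r)) := by
      simp only [← Finset.sum_sub_distrib]
      exact Finset.sum_congr rfl fun x _ => Finset.sum_congr rfl fun r _ => by ring
    rw [key, hA, hB, sub_self]
end

section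
/- (Failure of locality for disconnected components) There exist graphs G_1, G_2 on four vertices with N_{G_1}(r̄) = N_{G_2}(r̄) for the pattern r = 0101 (X_1, X_3 missing), such that the MMG decompositions differ: under G_1 with edges {(1,2),(2,3),(3,4),(1,4)} the decomposition is p(x_1|x_2,x_4,R=r)·p(x_3|x_2,x_4,R=r), while under G_2 with edges {(1,2),(2,3),(3,4)} it is p(x_1|x_2,R=r)·p(x_3|x_2,x_4,R=r). Formally: there exists a joint distribution for which these two products (evaluated with PAI-identified conditionals) are not equal, even though N_{G_1}({1,3}) = N_{G_2}({1,3}) = {2,4}. -/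
open Finset
open scoped Classical

/-! ### Auxiliary definitions and lemmas for `stmt17` -/

/-- Cycle graph `0-1-2-3-0`. -/
def g1 : SimpleGraph (Fin 4) := SimpleGraph.fromRel (fun u v =>
  (u=0∧v=1)∨(u=1∧v=2)∨(u=2∧v=3)∨(u=0∧v=3))

/-- Path graph `0-1-2-3`. -/
def g2 : SimpleGraph (Fin 4) := SimpleGraph.fromRel (fun u v =>
  (u=0∧v=1)∨(u=1∧v=2)∨(u=2∧v=3))

/-- The witnessing distribution: `X₀ = X₃` fair coin, everything else uniform. -/
noncomputable def myp : (Fin 4 → Bool) → (Fin 4 → Bool) → ℝ :=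
  fun y _ => if y 0 = y 3 then (1:ℝ)/128 else 0

lemma compOf_singleton (G : SimpleGraph (Fin 4)) (M : Set (Fin 4)) (v : Fin 4)
    (hv : v ∈ M) (h : ∀ u ∈ M, ¬ G.Adj v u) : compOf G M v = {v} := by
  ext u
  simp only [compOf, reachIn, Set.mem_setOf_eq, Set.mem_singleton_iff]
  constructor
  · rintro ⟨-, h2⟩
    induction h2 with
    | refl => rfl
    | tail h1 hb ih =>
        subst ih
        exact absurd hb.2 (h _ hb.1)
  · rintro rfl; exact ⟨hv, .refl⟩

lemma components_pair (G : SimpleGraph (Fin 4))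
    (h0 : compOf G ({0,2} : Set (Fin 4)) 0 = {0})
    (h2 : compOf G ({0,2} : Set (Fin 4)) 2 = {2}) :
    components G ({0,2} : Set (Fin 4)) = {({0} : Set (Fin 4)), ({2} : Set (Fin 4))} := by
  ext c
  simp only [components, Set.mem_setOf_eq, Set.mem_insert_iff, Set.mem_singleton_iff,
    exists_eq_or_imp, exists_eq_left, h0, h2]

lemma margOn_eval (A : Set (Fin 4)) (x : Fin 4 → Bool) (r : Fin 4 → Bool)
    (P : (Fin 4 → Bool) → Prop) [DecidablePred P]
    (h : ∀ y : Fin 4 → Bool, ((∀ j ∈ A, y j = x j) ∧ y 0 = y 3) ↔ P y) :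
    margOn myp A x r = ((Finset.univ.filter P).card : ℝ) * (1/128) := by
  unfold margOn myp
  trans (∑ y : Fin 4 → Bool, if P y then (1:ℝ)/128 else 0)
  · refine Finset.sum_congr rfl fun y _ => ?_
    by_cases h1 : ∀ j ∈ A, y j = x j
    · by_cases h2 : y 0 = y 3
      · rw [if_pos h1, if_pos h2, if_pos ((h y).mp ⟨h1, h2⟩)]
      · rw [if_pos h1, if_neg h2, if_neg (fun hp => h2 ((h y).mpr hp).2)]
    · rw [if_neg h1, if_neg (fun hp => h1 ((h y).mpr hp).1)]
  · rw [← Finset.sum_filter, Finset.sum_const, nsmul_eq_mul]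

lemma margObs_eval (A E : Set (Fin 4)) (x : Fin 4 → Bool)
    (P Q : (Fin 4 → Bool) → Prop) [DecidablePred P] [DecidablePred Q]
    (hA : ∀ y : Fin 4 → Bool, ((∀ j ∈ A, y j = x j) ∧ y 0 = y 3) ↔ P y)
    (hE : ∀ r : Fin 4 → Bool, obsEv E r ↔ Q r) :
    margObs myp A E x
      = ((Finset.univ.filter Q).card : ℝ) * (((Finset.univ.filter P).card : ℝ) * (1/128)) := by
  unfold margObs
  trans (∑ r : Fin 4 → Bool, if Q r then ((Finset.univ.filter P).card : ℝ) * (1/128) else 0)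
  · refine Finset.sum_congr rfl fun r _ => ?_
    by_cases h1 : obsEv E r
    · rw [if_pos h1, if_pos ((hE r).mp h1), margOn_eval A x r P hA]
    · rw [if_neg h1, if_neg (fun hq => h1 ((hE r).mpr hq))]
  · rw [← Finset.sum_filter, Finset.sum_const, nsmul_eq_mul]

/-- failure of locality for disconnected components.
There exist graphs `G₁` (cycle `1-2-3-4-1`) and `G₂` (path `1-2-3-4`) on four vertices
with `N_{G₁}({1,3}) = N_{G₂}({1,3}) = {2,4}` for the pattern `r = 0101` (so `X₁, X₃`
missing), together with a joint distribution for which the two MMG-PAI imputation models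
(the products of PAI-identified conditionals over connected components) differ. -/
theorem stmt17 :
    ∃ (G₁ G₂ : SimpleGraph (Fin 4))
      (p : (Fin 4 → Bool) → (Fin 4 → Bool) → ℝ) (x : Fin 4 → Bool),
      (∀ u v : Fin 4, G₁.Adj u v ↔
        ({u, v} : Set (Fin 4)) ∈
          ({{0, 1}, {1, 2}, {2, 3}, {0, 3}} : Set (Set (Fin 4)))) ∧
      (∀ u v : Fin 4, G₂.Adj u v ↔
        ({u, v} : Set (Fin 4)) ∈
          ({{0, 1}, {1, 2}, {2, 3}} : Set (Set (Fin 4)))) ∧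
      (∀ x' r, 0 ≤ p x' r) ∧ (∑ x' : Fin 4 → Bool, ∑ r : Fin 4 → Bool, p x' r) = 1 ∧
      nbd G₁ ({0, 2} : Set (Fin 4)) = ({1, 3} : Set (Fin 4)) ∧
      nbd G₂ ({0, 2} : Set (Fin 4)) = ({1, 3} : Set (Fin 4)) ∧
      mmgModel p G₁ x (fun j => decide (j = 1 ∨ j = 3))
        ≠ mmgModel p G₂ x (fun j => decide (j = 1 ∨ j = 3)) := by
  classical
  refine ⟨g1, g2, myp, (fun _ => false), ?_, ?_, ?_, ?_, ?_, ?_, ?_⟩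
  · intro u v
    simp only [g1, SimpleGraph.fromRel_adj, Set.mem_insert_iff, Set.mem_singleton_iff,
      Set.ext_iff]
    revert u v; decide
  · intro u v
    simp only [g2, SimpleGraph.fromRel_adj, Set.mem_insert_iff, Set.mem_singleton_iff,
      Set.ext_iff]
    revert u v; decide
  · intro x' r
    unfold myp
    split <;> norm_num
  · have h1 : ∀ x' : Fin 4 → Bool, (∑ _r : Fin 4 → Bool, myp x' _r)
        = 16 * (if x' 0 = x' 3 then (1:ℝ)/128 else 0) := by
      intro x'
      simp only [myp]
      rw [Finset.sum_const, nsmul_eq_mul, Finset.card_univ]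
      norm_num [show Fintype.card (Fin 4 → Bool) = 16 from by decide]
    simp only [h1]
    rw [← Finset.mul_sum]
    have h2 : (∑ y : Fin 4 → Bool, if y 0 = y 3 then (1:ℝ)/128 else 0)
        = ((Finset.univ.filter (fun y : Fin 4 → Bool => y 0 = y 3)).card : ℝ) * (1/128) := by
      rw [← Finset.sum_filter, Finset.sum_const, nsmul_eq_mul]
    rw [h2, show (Finset.univ.filter (fun y : Fin 4 → Bool => y 0 = y 3)).card = 8 from by
      decide]
    norm_num
  · ext v
    simp only [nbd, g1, SimpleGraph.fromRel_adj, Set.mem_setOf_eq, Set.mem_insert_iff,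
      Set.mem_singleton_iff]
    revert v; decide
  · ext v
    simp only [nbd, g2, SimpleGraph.fromRel_adj, Set.mem_setOf_eq, Set.mem_insert_iff,
      Set.mem_singleton_iff]
    revert v; decide
  · -- the main inequality
    have hM : missingSet (fun j : Fin 4 => decide (j = 1 ∨ j = 3)) = ({0,2} : Set (Fin 4)) := by
      ext j
      simp only [missingSet, Set.mem_setOf_eq, Set.mem_insert_iff, Set.mem_singleton_iff]
      revert j; decide
    have hadj1 : ∀ u ∈ ({0,2} : Set (Fin 4)), ¬ g1.Adj 0 u := by
      intro u hu
      simp only [Set.mem_insert_iff, Set.mem_singleton_iff] at hu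
      rcases hu with rfl | rfl <;>
        simp [g1, SimpleGraph.fromRel_adj] <;> decide
    have hadj1' : ∀ u ∈ ({0,2} : Set (Fin 4)), ¬ g1.Adj 2 u := by
      intro u hu
      simp only [Set.mem_insert_iff, Set.mem_singleton_iff] at hu
      rcases hu with rfl | rfl <;>
        simp [g1, SimpleGraph.fromRel_adj] <;> decide
    have hadj2 : ∀ u ∈ ({0,2} : Set (Fin 4)), ¬ g2.Adj 0 u := by
      intro u hu
      simp only [Set.mem_insert_iff, Set.mem_singleton_iff] at hu
      rcases hu with rfl | rfl <;>
        simp [g2, SimpleGraph.fromRel_adj] <;> decide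
    have hadj2' : ∀ u ∈ ({0,2} : Set (Fin 4)), ¬ g2.Adj 2 u := by
      intro u hu
      simp only [Set.mem_insert_iff, Set.mem_singleton_iff] at hu
      rcases hu with rfl | rfl <;>
        simp [g2, SimpleGraph.fromRel_adj] <;> decide
    have h0mem : (0 : Fin 4) ∈ ({0,2} : Set (Fin 4)) := by simp
    have h2mem : (2 : Fin 4) ∈ ({0,2} : Set (Fin 4)) := by simp
    have hc1 : components g1 ({0,2} : Set (Fin 4)) = {({0} : Set (Fin 4)), ({2} : Set (Fin 4))} :=
      components_pair g1 (compOf_singleton g1 _ 0 h0mem hadj1)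
        (compOf_singleton g1 _ 2 h2mem hadj1')
    have hc2 : components g2 ({0,2} : Set (Fin 4)) = {({0} : Set (Fin 4)), ({2} : Set (Fin 4))} :=
      components_pair g2 (compOf_singleton g2 _ 0 h0mem hadj2)
        (compOf_singleton g2 _ 2 h2mem hadj2')
    have hne : ({0} : Set (Fin 4)) ≠ ({2} : Set (Fin 4)) := by
      intro h
      have h0 := Set.ext_iff.mp h 0
      rw [Set.mem_singleton_iff, Set.mem_singleton_iff] at h0
      exact absurd (h0.mp rfl) (by decide)
    -- neighborhoods of the components
    have hn10 : nbd g1 ({0} : Set (Fin 4)) = ({1,3} : Set (Fin 4)) := by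
      ext v
      simp only [nbd, g1, SimpleGraph.fromRel_adj, Set.mem_setOf_eq, Set.mem_insert_iff,
        Set.mem_singleton_iff]
      revert v; decide
    have hn12 : nbd g1 ({2} : Set (Fin 4)) = ({1,3} : Set (Fin 4)) := by
      ext v
      simp only [nbd, g1, SimpleGraph.fromRel_adj, Set.mem_setOf_eq, Set.mem_insert_iff,
        Set.mem_singleton_iff]
      revert v; decide
    have hn20 : nbd g2 ({0} : Set (Fin 4)) = ({1} : Set (Fin 4)) := by
      ext v
      simp only [nbd, g2, SimpleGraph.fromRel_adj, Set.mem_setOf_eq, Set.mem_insert_iff,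
        Set.mem_singleton_iff]
      revert v; decide
    have hn22 : nbd g2 ({2} : Set (Fin 4)) = ({1,3} : Set (Fin 4)) := by
      ext v
      simp only [nbd, g2, SimpleGraph.fromRel_adj, Set.mem_setOf_eq, Set.mem_insert_iff,
        Set.mem_singleton_iff]
      revert v; decide
    -- evaluate the four PAI conditionals
    have e10 : condPAI myp g1 ({0} : Set (Fin 4)) (fun _ => false) = 1 := by
      unfold condPAI condObs
      rw [hn10]
      rw [margObs_eval _ _ _
          (fun y => y 0 = false ∧ y 1 = false ∧ y 3 = false ∧ y 0 = y 3)
          (fun r => r 0 = true ∧ r 1 = true ∧ r 3 = true)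
          (by intro y; simp only [Set.mem_union, Set.mem_insert_iff, Set.mem_singleton_iff, forall_eq_or_imp, forall_eq] <;> tauto)
          (by intro r; simp only [obsEv, Set.mem_union, Set.mem_insert_iff, Set.mem_singleton_iff, forall_eq_or_imp, forall_eq] <;> tauto),
        margObs_eval _ _ _
          (fun y => y 1 = false ∧ y 3 = false ∧ y 0 = y 3)
          (fun r => r 0 = true ∧ r 1 = true ∧ r 3 = true)
          (by intro y; simp only [Set.mem_union, Set.mem_insert_iff, Set.mem_singleton_iff, forall_eq_or_imp, forall_eq] <;> tauto)
          (by intro r; simp only [obsEv, Set.mem_union, Set.mem_insert_iff, Set.mem_singleton_iff, forall_eq_or_imp, forall_eq] <;> tauto)]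
      norm_num [show (Finset.univ.filter (fun y : Fin 4 → Bool =>
          y 0 = false ∧ y 1 = false ∧ y 3 = false ∧ y 0 = y 3)).card = 2 from by decide,
        show (Finset.univ.filter (fun y : Fin 4 → Bool =>
          y 1 = false ∧ y 3 = false ∧ y 0 = y 3)).card = 2 from by decide,
        show (Finset.univ.filter (fun r : Fin 4 → Bool =>
          r 0 = true ∧ r 1 = true ∧ r 3 = true)).card = 2 from by decide]
    have e20 : condPAI myp g2 ({0} : Set (Fin 4)) (fun _ => false) = 1/2 := by
      unfold condPAI condObs
      rw [hn20]
      rw [margObs_eval _ _ _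
          (fun y => y 0 = false ∧ y 1 = false ∧ y 0 = y 3)
          (fun r => r 0 = true ∧ r 1 = true)
          (by intro y; simp only [Set.mem_union, Set.mem_insert_iff, Set.mem_singleton_iff, forall_eq_or_imp, forall_eq] <;> tauto)
          (by intro r; simp only [obsEv, Set.mem_union, Set.mem_insert_iff, Set.mem_singleton_iff, forall_eq_or_imp, forall_eq] <;> tauto),
        margObs_eval _ _ _
          (fun y => y 1 = false ∧ y 0 = y 3)
          (fun r => r 0 = true ∧ r 1 = true)
          (by intro y; simp only [Set.mem_union, Set.mem_insert_iff, Set.mem_singleton_iff, forall_eq_or_imp, forall_eq] <;> tauto)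
          (by intro r; simp only [obsEv, Set.mem_union, Set.mem_insert_iff, Set.mem_singleton_iff, forall_eq_or_imp, forall_eq] <;> tauto)]
      norm_num [show (Finset.univ.filter (fun y : Fin 4 → Bool =>
          y 0 = false ∧ y 1 = false ∧ y 0 = y 3)).card = 2 from by decide,
        show (Finset.univ.filter (fun y : Fin 4 → Bool =>
          y 1 = false ∧ y 0 = y 3)).card = 4 from by decide,
        show (Finset.univ.filter (fun r : Fin 4 → Bool =>
          r 0 = true ∧ r 1 = true)).card = 4 from by decide]
    have e12 : condPAI myp g1 ({2} : Set (Fin 4)) (fun _ => false) = 1/2 := by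
      unfold condPAI condObs
      rw [hn12]
      rw [margObs_eval _ _ _
          (fun y => y 1 = false ∧ y 2 = false ∧ y 3 = false ∧ y 0 = y 3)
          (fun r => r 1 = true ∧ r 2 = true ∧ r 3 = true)
          (by intro y; simp only [Set.mem_union, Set.mem_insert_iff, Set.mem_singleton_iff, forall_eq_or_imp, forall_eq] <;> tauto)
          (by intro r; simp only [obsEv, Set.mem_union, Set.mem_insert_iff, Set.mem_singleton_iff, forall_eq_or_imp, forall_eq] <;> tauto),
        margObs_eval _ _ _
          (fun y => y 1 = false ∧ y 3 = false ∧ y 0 = y 3)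
          (fun r => r 1 = true ∧ r 2 = true ∧ r 3 = true)
          (by intro y; simp only [Set.mem_union, Set.mem_insert_iff, Set.mem_singleton_iff, forall_eq_or_imp, forall_eq] <;> tauto)
          (by intro r; simp only [obsEv, Set.mem_union, Set.mem_insert_iff, Set.mem_singleton_iff, forall_eq_or_imp, forall_eq] <;> tauto)]
      norm_num [show (Finset.univ.filter (fun y : Fin 4 → Bool =>
          y 1 = false ∧ y 2 = false ∧ y 3 = false ∧ y 0 = y 3)).card = 1 from by decide,
        show (Finset.univ.filter (fun y : Fin 4 → Bool =>
          y 1 = false ∧ y 3 = false ∧ y 0 = y 3)).card = 2 from by decide,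
        show (Finset.univ.filter (fun r : Fin 4 → Bool =>
          r 1 = true ∧ r 2 = true ∧ r 3 = true)).card = 2 from by decide]
    have e22 : condPAI myp g2 ({2} : Set (Fin 4)) (fun _ => false) = 1/2 := by
      unfold condPAI condObs
      rw [hn22]
      rw [margObs_eval _ _ _
          (fun y => y 1 = false ∧ y 2 = false ∧ y 3 = false ∧ y 0 = y 3)
          (fun r => r 1 = true ∧ r 2 = true ∧ r 3 = true)
          (by intro y; simp only [Set.mem_union, Set.mem_insert_iff, Set.mem_singleton_iff, forall_eq_or_imp, forall_eq] <;> tauto)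
          (by intro r; simp only [obsEv, Set.mem_union, Set.mem_insert_iff, Set.mem_singleton_iff, forall_eq_or_imp, forall_eq] <;> tauto),
        margObs_eval _ _ _
          (fun y => y 1 = false ∧ y 3 = false ∧ y 0 = y 3)
          (fun r => r 1 = true ∧ r 2 = true ∧ r 3 = true)
          (by intro y; simp only [Set.mem_union, Set.mem_insert_iff, Set.mem_singleton_iff, forall_eq_or_imp, forall_eq] <;> tauto)
          (by intro r; simp only [obsEv, Set.mem_union, Set.mem_insert_iff, Set.mem_singleton_iff, forall_eq_or_imp, forall_eq] <;> tauto)]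
      norm_num [show (Finset.univ.filter (fun y : Fin 4 → Bool =>
          y 1 = false ∧ y 2 = false ∧ y 3 = false ∧ y 0 = y 3)).card = 1 from by decide,
        show (Finset.univ.filter (fun y : Fin 4 → Bool =>
          y 1 = false ∧ y 3 = false ∧ y 0 = y 3)).card = 2 from by decide,
        show (Finset.univ.filter (fun r : Fin 4 → Bool =>
          r 1 = true ∧ r 2 = true ∧ r 3 = true)).card = 2 from by decide]
    -- assemble the two models
    have hm1 : mmgModel myp g1 (fun _ => false) (fun j => decide (j = 1 ∨ j = 3)) = 1 * (1/2) := by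
      unfold mmgModel
      rw [show (Set.toFinite (components g1 (missingSet (fun j : Fin 4 => decide (j = 1 ∨ j = 3))))).toFinset
          = ({({0} : Set (Fin 4)), ({2} : Set (Fin 4))} : Finset (Set (Fin 4))) from by
        rw [hM]
        ext c
        simp only [Set.Finite.mem_toFinset, hc1, Set.mem_insert_iff, Set.mem_singleton_iff,
          Finset.mem_insert, Finset.mem_singleton]]
      rw [Finset.prod_pair hne, e10, e12]
    have hm2 : mmgModel myp g2 (fun _ => false) (fun j => decide (j = 1 ∨ j = 3)) = (1/2) * (1/2) := by
      unfold mmgModel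
      rw [show (Set.toFinite (components g2 (missingSet (fun j : Fin 4 => decide (j = 1 ∨ j = 3))))).toFinset
          = ({({0} : Set (Fin 4)), ({2} : Set (Fin 4))} : Finset (Set (Fin 4))) from by
        rw [hM]
        ext c
        simp only [Set.Finite.mem_toFinset, hc2, Set.mem_insert_iff, Set.mem_singleton_iff,
          Finset.mem_insert, Finset.mem_singleton]]
      rw [Finset.prod_pair hne, e20, e22]
    rw [hm1, hm2]
    norm_num
end
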